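/- Let μ be a probability measure on [0,∞), let v̄ > ṽ > 0 and p̄, p̃ ≥ 0. If ∫ v̄/(1 + v̄·p̄ + y) dμ(y) = ∫ ṽ/(1 + ṽ·p̃ + y) dμ(y), then p̄ > p̃. -/
import Mathlib


open MeasureTheory

theorem power_monotone_of_kkt (μ : Measure ℝ) [IsProbabilityMeasure μ]
    (hsupp : ∀ᵐ y ∂μ, 0 ≤ y) (vbar vtil pbar ptil : ℝ) (hvt : 0 < vtil) (hvv : vtil < vbar)
    (hpb : 0 ≤ pbar) (hpt : 0 ≤ ptil)
    (hkkt : ∫ y, vbar / (1 + vbar * pbar + y) ∂μ = ∫ y, vtil / (1 + vtil * ptil + y) ∂μ) :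
    ptil < pbar := by
  by_contra hle
  push_neg at hle
  have hvb : 0 < vbar := hvt.trans hvv
  set f : ℝ → ℝ := fun y => vbar / (1 + vbar * pbar + y) with hf
  set g : ℝ → ℝ := fun y => vtil / (1 + vtil * ptil + y) with hg
  have hfm : Measurable f := measurable_const.div (measurable_const.add measurable_id)
  have hgm : Measurable g := measurable_const.div (measurable_const.add measurable_id)
  have hfA : ∀ y : ℝ, 0 ≤ y → 0 < 1 + vbar * pbar + y := fun y hy => by positivity
  have hgA : ∀ y : ℝ, 0 ≤ y → 0 < 1 + vtil * ptil + y := fun y hy => by positivity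
  have hfi : Integrable f μ := by
    refine Integrable.mono' (integrable_const vbar) hfm.aestronglyMeasurable ?_
    filter_upwards [hsupp] with y hy
    rw [Real.norm_eq_abs, abs_of_nonneg (div_pos hvb (hfA y hy)).le,
      div_le_iff₀ (hfA y hy)]
    nlinarith [mul_nonneg hvb.le hy, mul_nonneg (mul_nonneg hvb.le hvb.le) hpb]
  have hgi : Integrable g μ := by
    refine Integrable.mono' (integrable_const vtil) hgm.aestronglyMeasurable ?_
    filter_upwards [hsupp] with y hy
    rw [Real.norm_eq_abs, abs_of_nonneg (div_pos hvt (hgA y hy)).le,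
      div_le_iff₀ (hgA y hy)]
    nlinarith [mul_nonneg hvt.le hy, mul_nonneg (mul_nonneg hvt.le hvt.le) hpt]
  have hlt : ∀ᵐ y ∂μ, g y < f y := by
    filter_upwards [hsupp] with y hy
    rw [hf, hg]
    rw [div_lt_div_iff₀ (hgA y hy) (hfA y hy)]
    have h1 : vtil * y ≤ vbar * y := mul_le_mul_of_nonneg_right hvv.le hy
    nlinarith [mul_pos hvt hvb, mul_le_mul_of_nonneg_left hle (mul_pos hvt hvb).le]
  have hpos : 0 < ∫ y, (f y - g y) ∂μ := by
    rw [integral_pos_iff_support_of_nonneg_ae]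
    · set s := Function.support fun y => f y - g y with hs
      have hmem : ∀ᵐ y ∂μ, y ∈ s := by
        filter_upwards [hlt] with y hy
        simp only [hs, Function.mem_support]
        exact sub_ne_zero.mpr (ne_of_gt hy)
      have hcz : μ sᶜ = 0 := by
        have := ae_iff.mp hmem
        simpa [Set.compl_def] using this
      have h1 : (1 : ENNReal) ≤ μ s + μ sᶜ := by
        calc (1 : ENNReal) = μ Set.univ := (measure_univ).symm
        _ = μ (s ∪ sᶜ) := by rw [Set.union_compl_self]
        _ ≤ μ s + μ sᶜ := measure_union_le _ _
      rw [hcz, add_zero] at h1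
      exact lt_of_lt_of_le (by norm_num) h1
    · filter_upwards [hlt] with y hy
      simp only [Pi.zero_apply]
      linarith
    · exact hfi.sub hgi
  rw [integral_sub hfi hgi, hkkt] at hpos
  simp at hpos
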